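/- arXiv:0808.3286 — 2 statements merged into one kernel-verified Lean document; each statement's English description precedes it below -/
import Mathlib

section
/- Let X be a minimal surface of general type with K_X² = 24 and let F, M be fibers (general fibers of two fibrations) with F·K_X = 2(g(F)−1), M·K_X = 2(g(M)−1), g(F), g(M) ≥ 2. If the divisor class D = F/(g(F)−1) + M/(g(M)−1) − K_X/6 satisfies D·K_X = 0, then the Hodge index theorem (D² ≤ 0) yields 3(F·M) ≤ (g(F)−1)(g(M)−1), with equality iff 6(g(M)−1)F + 6(g(F)−1)M is numerically equivalent to (g(F)−1)(g(M)−1)K_X. -/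
/-- Hodge index argument on a minimal surface of general type with
`K² = 24`: for fiber classes `F`, `M` with `F² = M² = 0`, `F·K = 2(g(F)−1)`,
`M·K = 2(g(M)−1)`, `g(F), g(M) ≥ 2`, if `D = F/(g(F)−1) + M/(g(M)−1) − K/6`
satisfies `D·K = 0`, then `3(F·M) ≤ (g(F)−1)(g(M)−1)`, with equality iff
`6(g(M)−1)F + 6(g(F)−1)M` is numerically equivalent to `(g(F)−1)(g(M)−1)K`. -/
theorem hodge_index_fiber_inequality
    (V : Type*) [AddCommGroup V] [Module ℝ V]
    (B : V →ₗ[ℝ] V →ₗ[ℝ] ℝ) (hsymm : ∀ x y, B x y = B y x)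
    (K F M : V) (gF gM : ℕ) (hgF : 2 ≤ gF) (hgM : 2 ≤ gM)
    (hK2 : B K K = 24) (hF2 : B F F = 0) (hM2 : B M M = 0)
    (hFK : B F K = 2 * ((gF : ℝ) - 1)) (hMK : B M K = 2 * ((gM : ℝ) - 1))
    -- Hodge index theorem: a class orthogonal to K has nonpositive square,
    -- with equality iff the class is numerically trivial
    (hodge : ∀ v, B v K = 0 → B v v ≤ 0 ∧ (B v v = 0 → ∀ w, B v w = 0))
    (hDK : B (((gF : ℝ) - 1)⁻¹ • F + ((gM : ℝ) - 1)⁻¹ • M - (6 : ℝ)⁻¹ • K) K = 0) :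
    3 * B F M ≤ ((gF : ℝ) - 1) * ((gM : ℝ) - 1) ∧
      (3 * B F M = ((gF : ℝ) - 1) * ((gM : ℝ) - 1) ↔
        ∀ w, B ((6 * ((gM : ℝ) - 1)) • F + (6 * ((gF : ℝ) - 1)) • M
          - (((gF : ℝ) - 1) * ((gM : ℝ) - 1)) • K) w = 0) := by
  set a : ℝ := (gF : ℝ) - 1 with ha_def
  set b : ℝ := (gM : ℝ) - 1 with hb_def
  have hgF' : (2 : ℝ) ≤ (gF : ℝ) := by exact_mod_cast hgF
  have hgM' : (2 : ℝ) ≤ (gM : ℝ) := by exact_mod_cast hgM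
  have ha : 0 < a := by simp only [ha_def]; linarith
  have hb : 0 < b := by simp only [hb_def]; linarith
  have hMF : B M F = B F M := hsymm M F
  have hKF : B K F = 2 * a := by rw [hsymm K F, hFK]
  have hKM : B K M = 2 * b := by rw [hsymm K M, hMK]
  set D : V := a⁻¹ • F + b⁻¹ • M - (6 : ℝ)⁻¹ • K with hD_def
  have hDD : B D D = 2 * B F M / (a * b) - 2 / 3 := by
    simp only [hD_def, map_add, map_sub, map_smul, LinearMap.add_apply,
      LinearMap.sub_apply, LinearMap.smul_apply, smul_eq_mul,
      hF2, hM2, hK2, hFK, hMK, hMF, hKF, hKM]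
    field_simp
    ring
  obtain ⟨hle, heq⟩ := hodge D hDK
  have hineq : 3 * B F M ≤ a * b := by
    rw [hDD] at hle
    have h1 : 2 * B F M / (a * b) ≤ 2 / 3 := by linarith
    have h2 : 0 < a * b := mul_pos ha hb
    rw [div_le_div_iff₀ h2 (by norm_num)] at h1
    nlinarith
  refine ⟨hineq, ?_, ?_⟩
  · intro h
    have hD0 : B D D = 0 := by rw [hDD]; field_simp; linarith
    have hz := heq hD0
    intro w
    have hE : (6 * b) • F + (6 * a) • M - (a * b) • K = (6 * a * b) • D := by
      rw [hD_def]
      match_scalars <;> field_simp <;> ring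
    rw [hE, map_smul, LinearMap.smul_apply, smul_eq_mul, hz w, mul_zero]
  · intro hw
    have h1 := hw M
    simp only [map_add, map_sub, map_smul, LinearMap.add_apply, LinearMap.sub_apply,
      LinearMap.smul_apply, smul_eq_mul, hM2, hKM] at h1
    nlinarith [h1]
end

section
/- Let S be a minimal surface of general type with ample K_S, K_S² = 8, admitting no (−n)-curves, and let E be an effective divisor with E² = −4 and E·K_S = 2. Then E = 2A for an irreducible curve A with A² = −1 and A·K_S = 1. -/
/-- On a minimal surface of general type with `K` ample, `K² = 8` and no
`(−n)`-curves (no smooth rational curves), an effective divisor `E` with `E² = −4`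
and `E·K = 2` satisfies `E = 2A` for an irreducible curve `A` with `A² = −1` and
`A·K = 1`. -/
theorem effective_divisor_is_double_curve
    (V : Type*) [AddCommGroup V] [Module ℤ V]
    (B : V →ₗ[ℤ] V →ₗ[ℤ] ℤ) (hsymm : ∀ x y, B x y = B y x)
    (Irr SmoothRational : V → Prop)
    (K E : V)
    -- K is ample: every irreducible curve has positive degree
    (hample : ∀ C, Irr C → 1 ≤ B C K)
    (hK2 : B K K = 8)
    -- no (−n)-curves: no smooth rational curves on S
    (hnorat : ∀ C, Irr C → ¬ SmoothRational C)
    -- adjunction: C² + C·K = 2g(C) − 2, and an irreducible curve of genus 0 is smooth rational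
    (hadj : ∀ C, Irr C → ∃ gC : ℤ, 0 ≤ gC ∧ B C C + B C K = 2 * gC - 2 ∧
      (gC = 0 → SmoothRational C))
    -- algebraic index theorem
    (hindex : ∀ D, B D K = 0 → B D D ≤ 0)
    -- distinct irreducible curves meet nonnegatively
    (hdistinct : ∀ C D, Irr C → Irr D → C ≠ D → 0 ≤ B C D)
    -- E is effective: a sum of irreducible curves
    (heff : ∃ (n : ℕ) (A : Fin n → V), (∀ i, Irr (A i)) ∧ E = ∑ i, A i)
    (hE2 : B E E = -4) (hEK : B E K = 2) :
    ∃ A, Irr A ∧ E = A + A ∧ B A A = -1 ∧ B A K = 1 := by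
  obtain ⟨n, A, hIrr, hEsum⟩ := heff
  have hBEK : ∑ i, B (A i) K = 2 := by
    rw [← hEK, hEsum, map_sum, LinearMap.sum_apply]
  have hncast : (n : ℤ) ≤ 2 := by
    calc (n : ℤ) = ∑ _i : Fin n, (1 : ℤ) := by simp
    _ ≤ ∑ i, B (A i) K := Finset.sum_le_sum fun i _ => hample _ (hIrr i)
    _ = 2 := hBEK
  have hn : n ≤ 2 := by exact_mod_cast hncast
  interval_cases n
  · simp at hBEK
  · -- one component: genus 0, contradiction
    simp [Fin.sum_univ_one] at hBEK hEsum
    obtain ⟨g, hg0, hadjeq, hgrat⟩ := hadj (A 0) (hIrr 0)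
    rw [hEsum] at hE2
    have : g = 0 := by omega
    exact absurd (hgrat this) (hnorat _ (hIrr 0))
  · -- two components
    simp [Fin.sum_univ_two] at hBEK hEsum
    have h0 := hample _ (hIrr 0)
    have h1 := hample _ (hIrr 1)
    have hA0K : B (A 0) K = 1 := by omega
    have hA1K : B (A 1) K = 1 := by omega
    -- A_i² = -1 via adjunction + index theorem
    have hsq : ∀ i : Fin 2, B (A i) (A i) = -1 := by
      intro i
      have hAiK : B (A i) K = 1 := by fin_cases i <;> assumption
      obtain ⟨g, hg0, hadjeq, hgrat⟩ := hadj (A i) (hIrr i)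
      have hgne : g ≠ 0 := fun h => hnorat _ (hIrr i) (hgrat h)
      have hDK : B ((8 : ℤ) • A i - K) K = 0 := by
        simp only [map_sub, map_zsmul, map_smul, LinearMap.sub_apply,
          LinearMap.smul_apply, smul_eq_mul, hAiK, hK2]
        ring
      have hDD := hindex _ hDK
      simp only [map_sub, map_zsmul, map_smul, LinearMap.sub_apply,
        LinearMap.smul_apply, smul_eq_mul, hK2] at hDD
      have hs := hsymm (A i) K
      rw [hAiK] at hs
      omega
    have hE2' : B (A 0 + A 1) (A 0 + A 1) = -4 := by rw [← hEsum]; exact hE2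
    simp only [map_add, LinearMap.add_apply] at hE2'
    have hsym01 := hsymm (A 0) (A 1)
    have h00 := hsq 0
    have h11 := hsq 1
    have hneg : B (A 0) (A 1) = -1 := by omega
    have heq : A 0 = A 1 := by
      by_contra hne
      have := hdistinct _ _ (hIrr 0) (hIrr 1) hne
      omega
    exact ⟨A 0, hIrr 0, by rw [hEsum, heq], h00, hA0K⟩
end
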